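/- Let N ≥ 3, set 2* = 2N/(N−2), let b : Ω → ℝ be essentially bounded and measurable with b ≥ 0 a.e., let a > 0 be real, and let v : Ω → ℝ be measurable with v(x) > 0 for a.e. x ∈ Ω, such that x ↦ |v(x)|^{2*} is integrable and x ↦ h(x)·v(x)^(1−γ) is integrable on Ω. Define φ : (0, ∞) → ℝ by φ(t) = (a/2)·t² + (1/(γ−1))·∫_Ω h(x)·g(t·v(x))^(1−γ) dx + (1/(2·2*))·∫_Ω b(x)·g(t·v(x))^(2·2*) dx. Then φ(t) → +∞ as t → 0⁺, φ(t) → +∞ as t → +∞, and there exists t₀ > 0 with φ(t₀) = inf{ φ(t) : t > 0 }. -/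

import Mathlib

/-!
Because `g u ≤ u` and the exponent `1 - γ` is negative, the singular term is at least
`t ^ (1 - γ) / (γ - 1) * ∫ h v ^ (1 - γ)`, which blows up at `0⁺`; the quadratic term blows up
at `+∞`; all remaining terms are nonnegative. The bounds `c * min u 1 ≤ g u` and
`g u ^ 2 ≤ √2 * u` dominate both integrands locally uniformly in `t`, so the fibre map is
continuous on `(0, ∞)` by dominated convergence, and a continuous function on `(0, ∞)` that blows
up at both ends attains its infimum.
-/

open MeasureTheory Filter Topology Set

lemma rpow_le_rpow_add_rpow_of_mem_Icc {a b x : ℝ} (p : ℝ) (ha : 0 < a) (hx : x ∈ Icc a b) :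
    x ^ p ≤ a ^ p + b ^ p := by
  have hx0 : 0 < x := ha.trans_le hx.1
  rcases le_total 0 p with hp | hp
  · have := Real.rpow_le_rpow hx0.le hx.2 hp
    have := Real.rpow_nonneg ha.le p
    linarith
  · have := Real.rpow_le_rpow_of_nonpos ha hx.1 hp
    have := Real.rpow_nonneg (hx0.le.trans hx.2) p
    linarith

lemma min_one_rpow_le_rpow_add_one {v : ℝ} (p : ℝ) (hv : 0 < v) : min v 1 ^ p ≤ v ^ p + 1 := by
  have := Real.rpow_pos_of_pos hv p
  rcases min_choice v 1 with h | h <;> rw [h] <;> simp [this.le]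

lemma mul_min_one_le_min_one_mul {t w : ℝ} (ht : 0 ≤ t) (hw : 0 ≤ w) :
    min t 1 * min w 1 ≤ min (t * w) 1 :=
  le_min (mul_le_mul (min_le_left _ _) (min_le_left _ _) (le_min hw zero_le_one) ht)
    (mul_le_one₀ (min_le_right _ _) (le_min hw zero_le_one) (min_le_right _ _))

lemma integral_pos_of_ae_pos {α : Type*} [MeasurableSpace α] {μ : Measure α} [NeZero μ]
    {f : α → ℝ} (hf : Integrable f μ) (hpos : ∀ᵐ x ∂μ, 0 < f x) : 0 < ∫ x, f x ∂μ := by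
  rw [integral_pos_iff_support_of_nonneg_ae (hpos.mono fun _ hx => hx.le) hf]
  calc 0 < μ univ := by simp [NeZero.ne μ]
    _ ≤ μ (Function.support f) := measure_mono_ae (hpos.mono fun _ hx _ => hx.ne')

lemma exists_isMinOn_Ioi_of_tendsto {f : ℝ → ℝ} (hf : ContinuousOn f (Ioi 0))
    (h0 : Tendsto f (𝓝[>] 0) atTop) (htop : Tendsto f atTop atTop) :
    ∃ t₀ > 0, IsMinOn f (Ioi 0) t₀ := by
  -- through `exp`, this is the existence of a minimum of a coercive function on `ℝ`
  have hcont : Continuous (f ∘ Real.exp) :=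
    hf.comp_continuous Real.continuous_exp Real.exp_pos
  have hcoer : Tendsto (f ∘ Real.exp) (cocompact ℝ) atTop := by
    rw [cocompact_eq_atBot_atTop, tendsto_sup]
    exact ⟨h0.comp Real.tendsto_exp_atBot_nhdsGT, htop.comp Real.tendsto_exp_atTop⟩
  obtain ⟨x, hx⟩ := hcont.exists_forall_le hcoer
  refine ⟨Real.exp x, Real.exp_pos x, fun t (ht : 0 < t) => ?_⟩
  simpa [Real.exp_log ht] using hx (Real.log t)

lemma tendsto_and_exists_isMinOn_Ioi_of_add_le {f : ℝ → ℝ} {a c q : ℝ} (ha : 0 < a) (hc : 0 < c)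
    (hq : q < 0) (hf : ContinuousOn f (Ioi 0)) (hle : ∀ t, 0 < t → a * t ^ 2 + c * t ^ q ≤ f t) :
    Tendsto f (𝓝[>] 0) atTop ∧ Tendsto f atTop atTop ∧ ∃ t₀ > 0, IsMinOn f (Ioi 0) t₀ := by
  have h0 : Tendsto f (𝓝[>] 0) atTop :=
    tendsto_atTop_mono' _ (eventually_mem_nhdsWithin.mono fun t (ht : 0 < t) =>
        (le_add_of_nonneg_left (by positivity)).trans (hle t ht))
      ((tendsto_rpow_neg_nhdsGT_zero hq).const_mul_atTop hc)
  have htop : Tendsto f atTop atTop :=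
    tendsto_atTop_mono' _ ((eventually_gt_atTop 0).mono fun t ht =>
        (le_add_of_nonneg_right (by positivity)).trans (hle t ht))
      ((tendsto_pow_atTop two_ne_zero).const_mul_atTop ha)
  exact ⟨h0, htop, exists_isMinOn_Ioi_of_tendsto hf h0 htop⟩

/-- The change of variables of Colin–Jeanjean for quasilinear Schrödinger equations. -/
def IsChangeOfVariables (g : ℝ → ℝ) : Prop :=
  g 0 = 0 ∧ ∀ t, HasDerivAt g ((1 + 2 * g t ^ 2) ^ (-(1 / 2) : ℝ)) t

namespace IsChangeOfVariables

variable {g : ℝ → ℝ} (hg : IsChangeOfVariables g)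
include hg

lemma strictMono : StrictMono g :=
  strictMono_of_hasDerivAt_pos hg.2 fun _ => Real.rpow_pos_of_pos (by positivity) _

lemma continuous : Continuous g :=
  continuous_iff_continuousAt.2 fun t => (hg.2 t).continuousAt

lemma pos {u : ℝ} (hu : 0 < u) : 0 < g u :=
  hg.1 ▸ hg.strictMono hu

lemma le_self {u : ℝ} (hu : 0 ≤ u) : g u ≤ u := by
  have hmono : Monotone fun u => u - g u :=
    monotone_of_hasDerivAt_nonneg (fun t => (hasDerivAt_id t).sub (hg.2 t)) fun t =>
      sub_nonneg.2 <| Real.rpow_le_one_of_one_le_of_nonpos (by nlinarith [sq_nonneg (g t)])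
        (by norm_num)
  simpa [hg.1] using hmono hu

lemma sq_le_sqrt_two_mul {u : ℝ} (hu : 0 ≤ u) : g u ^ 2 ≤ √2 * u := by
  have hderiv : ∀ t, 2 * g t * (1 + 2 * g t ^ 2) ^ (-(1 / 2) : ℝ) ≤ √2 := by
    intro t
    have hpos : (0 : ℝ) < 1 + 2 * g t ^ 2 := by positivity
    rw [Real.rpow_neg hpos.le, ← Real.sqrt_eq_rpow, ← div_eq_mul_inv,
      div_le_iff₀ (Real.sqrt_pos.2 hpos), ← Real.sqrt_mul zero_le_two]
    refine le_trans (le_abs_self _) (Real.abs_le_sqrt ?_)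
    nlinarith
  have hmono : Monotone fun u => √2 * u - g u ^ 2 := by
    refine monotone_of_hasDerivAt_nonneg
      (fun t => ((hasDerivAt_id t).const_mul √2).sub ((hg.2 t).pow 2)) fun t => ?_
    have := hderiv t
    simp only [Pi.zero_apply, Nat.cast_ofNat, mul_one]
    linarith
  simpa [hg.1] using hmono hu

lemma exists_pos_mul_min_one_le : ∃ c > 0, ∀ u, 0 ≤ u → c * min u 1 ≤ g u := by
  set c : ℝ := (1 + 2 * 1 ^ 2) ^ (-(1 / 2) : ℝ)
  -- on `[0, 1]` we have `0 ≤ g ≤ 1`, hence `g' ≥ c`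
  have hunit : MonotoneOn (fun u => g u - c * u) (Icc 0 1) := by
    refine monotoneOn_of_hasDerivWithinAt_nonneg (convex_Icc 0 1)
      (fun t _ => ((hg.2 t).sub ((hasDerivAt_id t).const_mul c)).continuousAt.continuousWithinAt)
      (fun t _ => ((hg.2 t).sub ((hasDerivAt_id t).const_mul c)).hasDerivWithinAt) fun t ht => ?_
    rw [interior_Icc] at ht
    have h0 : 0 ≤ g t := (hg.pos ht.1).le
    have h1 : g t ≤ 1 := (hg.le_self ht.1.le).trans ht.2.le
    rw [mul_one, sub_nonneg]
    exact Real.rpow_le_rpow_of_nonpos (by positivity) (by nlinarith) (by norm_num)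
  have hle : ∀ u ∈ Icc (0 : ℝ) 1, c * u ≤ g u := fun u hu => by
    simpa [hg.1] using hunit ⟨le_rfl, zero_le_one⟩ hu hu.1
  refine ⟨c, Real.rpow_pos_of_pos (by norm_num) _, fun u hu => ?_⟩
  rcases le_total u 1 with hu1 | hu1
  · rw [min_eq_left hu1]
    exact hle u ⟨hu, hu1⟩
  · rw [min_eq_right hu1]
    exact (hle 1 ⟨zero_le_one, le_rfl⟩).trans (hg.strictMono.monotone hu1)

lemma exists_rpow_comp_mul_le {p t : ℝ} (hp : p ≤ 0) (ht : 0 < t) :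
    ∃ K, ∀ v, 0 < v → g (t * v) ^ p ≤ K * (v ^ p + 1) := by
  obtain ⟨c, hc, hcg⟩ := hg.exists_pos_mul_min_one_le
  refine ⟨(c * min t 1) ^ p, fun v hv => ?_⟩
  have hmin : c * min t 1 * min v 1 ≤ g (t * v) := calc
    c * min t 1 * min v 1 = c * (min t 1 * min v 1) := mul_assoc _ _ _
    _ ≤ c * min (t * v) 1 := by gcongr; exact mul_min_one_le_min_one_mul ht.le hv.le
    _ ≤ g (t * v) := hcg _ (mul_pos ht hv).le
  have hct : 0 < c * min t 1 := mul_pos hc (lt_min ht one_pos)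
  calc g (t * v) ^ p ≤ (c * min t 1 * min v 1) ^ p :=
        Real.rpow_le_rpow_of_nonpos (mul_pos hct (lt_min hv one_pos)) hmin hp
    _ = (c * min t 1) ^ p * min v 1 ^ p := Real.mul_rpow hct.le (le_min hv.le zero_le_one)
    _ ≤ (c * min t 1) ^ p * (v ^ p + 1) := by
        gcongr
        exact min_one_rpow_le_rpow_add_one p hv

lemma rpow_two_mul_le {s u : ℝ} (hs : 0 ≤ s) (hu : 0 ≤ u) : g u ^ (2 * s) ≤ (√2 * u) ^ s := by
  have hgu : 0 ≤ g u := by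
    rcases hu.eq_or_lt with rfl | hu
    · exact hg.1.ge
    · exact (hg.pos hu).le
  rw [Real.rpow_mul hgu, Real.rpow_two]
  exact Real.rpow_le_rpow (by positivity) (hg.sq_le_sqrt_two_mul hu) hs

variable {α : Type*} [MeasurableSpace α] {μ : Measure α} {v w : α → ℝ} {p : ℝ}

lemma aestronglyMeasurable_mul_rpow_comp_mul (hw : AEStronglyMeasurable w μ)
    (hv : AEMeasurable v μ) (p t : ℝ) :
    AEStronglyMeasurable (fun x => w x * g (t * v x) ^ p) μ :=
  hw.mul ((hg.continuous.measurable.comp_aemeasurable (hv.const_mul t)).pow_const p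
    ).aestronglyMeasurable

lemma integrable_mul_rpow_comp_mul_of_nonpos (hp : p ≤ 0) (hv : AEMeasurable v μ)
    (hv0 : ∀ᵐ x ∂μ, 0 < v x) (hw : Integrable w μ)
    (hwv : Integrable (fun x => w x * v x ^ p) μ) {t : ℝ} (ht : 0 < t) :
    Integrable (fun x => w x * g (t * v x) ^ p) μ := by
  obtain ⟨K, hK⟩ := hg.exists_rpow_comp_mul_le hp ht
  refine ((hwv.norm.add hw.norm).const_mul K).mono'
    (hg.aestronglyMeasurable_mul_rpow_comp_mul hw.1 hv p t) ?_
  filter_upwards [hv0] with x hx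
  have hvp : 0 < v x ^ p := Real.rpow_pos_of_pos hx p
  have hgp : 0 < g (t * v x) ^ p := Real.rpow_pos_of_pos (hg.pos (mul_pos ht hx)) p
  simp only [Pi.add_apply, norm_mul, Real.norm_of_nonneg hgp.le, Real.norm_of_nonneg hvp.le]
  calc ‖w x‖ * g (t * v x) ^ p ≤ ‖w x‖ * (K * (v x ^ p + 1)) := by gcongr; exact hK _ hx
    _ = K * (‖w x‖ * v x ^ p + ‖w x‖) := by ring

lemma integrable_mul_rpow_two_mul_comp_mul {b : α → ℝ} {s : ℝ} (hs : 0 ≤ s)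
    (hb : MemLp b ⊤ μ) (hv : AEMeasurable v μ) (hv0 : ∀ᵐ x ∂μ, 0 < v x)
    (hvs : Integrable (fun x => |v x| ^ s) μ) {t : ℝ} (ht : 0 < t) :
    Integrable (fun x => b x * g (t * v x) ^ (2 * s)) μ := by
  have hgs : Integrable (fun x => g (t * v x) ^ (2 * s)) μ := by
    refine (hvs.const_mul ((√2 * t) ^ s)).mono'
      ((hg.continuous.measurable.comp_aemeasurable (hv.const_mul t)).pow_const _
        ).aestronglyMeasurable ?_
    filter_upwards [hv0] with x hx
    rw [Real.norm_of_nonneg (Real.rpow_pos_of_pos (hg.pos (mul_pos ht hx)) _).le,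
      abs_of_pos hx, ← Real.mul_rpow (by positivity) hx.le, mul_assoc]
    exact hg.rpow_two_mul_le hs (mul_pos ht hx).le
  exact hgs.mul_of_top_right hb

lemma continuousOn_integral_mul_rpow_comp_mul (hv0 : ∀ᵐ x ∂μ, 0 < v x)
    (hint : ∀ t, 0 < t → Integrable (fun x => w x * g (t * v x) ^ p) μ) :
    ContinuousOn (fun t => ∫ x, w x * g (t * v x) ^ p ∂μ) (Ioi 0) := by
  intro t₀ (ht₀ : 0 < t₀)
  refine (continuousAt_of_dominated (bound := fun x =>
      ‖w x * g (t₀ / 2 * v x) ^ p‖ + ‖w x * g (2 * t₀ * v x) ^ p‖) ?_ ?_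
    ((hint _ (half_pos ht₀)).norm.add (hint _ (by positivity)).norm) ?_).continuousWithinAt
  · filter_upwards [lt_mem_nhds ht₀] with t ht using (hint t ht).1
  -- `g (t * v x)` stays between its values at `t₀ / 2` and `2 * t₀`
  · filter_upwards [Ioo_mem_nhds (half_lt_self ht₀) (lt_two_mul_self ht₀)] with t ht
    filter_upwards [hv0] with x hx
    have hlo := hg.pos (mul_pos (half_pos ht₀) hx)
    have hhi := hg.pos (mul_pos (by positivity : 0 < 2 * t₀) hx)
    have hmem : g (t * v x) ∈ Icc (g (t₀ / 2 * v x)) (g (2 * t₀ * v x)) :=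
      ⟨hg.strictMono.monotone (by gcongr; exact ht.1.le),
        hg.strictMono.monotone (by gcongr; exact ht.2.le)⟩
    simp only [norm_mul, Real.norm_of_nonneg (Real.rpow_nonneg hlo.le _),
      Real.norm_of_nonneg (Real.rpow_nonneg (hlo.le.trans hmem.1) _),
      Real.norm_of_nonneg (Real.rpow_nonneg hhi.le _), ← mul_add]
    gcongr
    exact rpow_le_rpow_add_rpow_of_mem_Icc p hlo hmem
  · filter_upwards [hv0] with x hx
    exact continuousAt_const.mul ((hg.continuous.comp (continuous_mul_const (v x))).continuousAt
      |>.rpow_const (Or.inl (hg.pos (mul_pos ht₀ hx)).ne'))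

lemma rpow_mul_integral_le_integral_mul_rpow_comp_mul (hp : p ≤ 0) (hw0 : 0 ≤ᵐ[μ] w)
    (hv0 : ∀ᵐ x ∂μ, 0 < v x) (hwv : Integrable (fun x => w x * v x ^ p) μ) {t : ℝ} (ht : 0 < t)
    (hint : Integrable (fun x => w x * g (t * v x) ^ p) μ) :
    t ^ p * ∫ x, w x * v x ^ p ∂μ ≤ ∫ x, w x * g (t * v x) ^ p ∂μ := by
  rw [← integral_const_mul]
  refine integral_mono_ae (hwv.const_mul _) hint ?_
  filter_upwards [hw0, hv0] with x hwx hx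
  rw [mul_left_comm, ← Real.mul_rpow ht.le hx.le]
  exact mul_le_mul_of_nonneg_left
    (Real.rpow_le_rpow_of_nonpos (hg.pos (mul_pos ht hx)) (hg.le_self (mul_pos ht hx).le) hp) hwx

lemma integral_mul_rpow_comp_mul_nonneg (hw0 : 0 ≤ᵐ[μ] w) (hv0 : ∀ᵐ x ∂μ, 0 < v x) {t : ℝ}
    (ht : 0 < t) : 0 ≤ ∫ x, w x * g (t * v x) ^ p ∂μ :=
  integral_nonneg_of_ae <| by
    filter_upwards [hw0, hv0] with x hwx hx
    exact mul_nonneg hwx (Real.rpow_nonneg (hg.pos (mul_pos ht hx)).le _)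

theorem tendsto_and_exists_isMinOn_of_eqOn [NeZero μ] {h b : α → ℝ} {φ : ℝ → ℝ}
    {a κ₁ κ₂ γ s : ℝ} (ha : 0 < a) (hκ₁ : 0 < κ₁) (hκ₂ : 0 ≤ κ₂) (hγ : 1 < γ) (hs : 0 ≤ s)
    (hh : Integrable h μ) (hh0 : ∀ᵐ x ∂μ, 0 < h x) (hb : MemLp b ⊤ μ) (hb0 : 0 ≤ᵐ[μ] b)
    (hv : AEMeasurable v μ) (hv0 : ∀ᵐ x ∂μ, 0 < v x)
    (hvs : Integrable (fun x => |v x| ^ s) μ) (hhv : Integrable (fun x => h x * v x ^ (1 - γ)) μ)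
    (hφ : EqOn φ (fun t => a / 2 * t ^ 2 + κ₁ * ∫ x, h x * g (t * v x) ^ (1 - γ) ∂μ
      + κ₂ * ∫ x, b x * g (t * v x) ^ (2 * s) ∂μ) (Ioi 0)) :
    Tendsto φ (𝓝[>] 0) atTop ∧ Tendsto φ atTop atTop ∧ ∃ t₀ > 0, IsMinOn φ (Ioi 0) t₀ := by
  have hp : 1 - γ ≤ 0 := by linarith
  have hA := fun t (ht : 0 < t) => hg.integrable_mul_rpow_comp_mul_of_nonpos hp hv hv0 hh hhv ht
  have hB := fun t (ht : 0 < t) => hg.integrable_mul_rpow_two_mul_comp_mul hs hb hv hv0 hvs ht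
  have hcont : ContinuousOn φ (Ioi 0) := by
    refine ContinuousOn.congr ?_ hφ
    have := hg.continuousOn_integral_mul_rpow_comp_mul hv0 hA
    have := hg.continuousOn_integral_mul_rpow_comp_mul hv0 hB
    fun_prop
  have hc₀ : 0 < ∫ x, h x * v x ^ (1 - γ) ∂μ := integral_pos_of_ae_pos hhv <| by
    filter_upwards [hh0, hv0] with x hhx hx using mul_pos hhx (Real.rpow_pos_of_pos hx _)
  refine tendsto_and_exists_isMinOn_Ioi_of_add_le (q := 1 - γ) (half_pos ha) (mul_pos hκ₁ hc₀)
    (by linarith) hcont fun t ht => ?_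
  have hA0 := hg.rpow_mul_integral_le_integral_mul_rpow_comp_mul hp
    (hh0.mono fun _ hx => hx.le) hv0 hhv ht (hA t ht)
  have hB0 := hg.integral_mul_rpow_comp_mul_nonneg (p := 2 * s) hb0 hv0 ht
  rw [hφ ht]
  nlinarith [mul_le_mul_of_nonneg_left hA0 hκ₁.le, mul_nonneg hκ₂ hB0]

end IsChangeOfVariables

theorem stmt_16_general (N : ℕ) (hN : 3 ≤ N)
    (Ω : Set (EuclideanSpace ℝ (Fin N)))
    (hΩb : Bornology.IsBounded Ω) (hΩpos : 0 < volume Ω)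
    (γ : ℝ) (hγ : 1 < γ)
    (g : ℝ → ℝ) (hg0 : g 0 = 0)
    (hg : ∀ t : ℝ, HasDerivAt g ((1 + 2 * g t ^ 2) ^ (-(1 / 2) : ℝ)) t)
    (h : EuclideanSpace ℝ (Fin N) → ℝ)
    (hh_int : IntegrableOn h Ω)
    (hh_pos : ∀ᵐ x ∂(volume.restrict Ω), 0 < h x)
    (s : ℝ) (hs : s = 2 * (N : ℝ) / ((N : ℝ) - 2))
    (b : EuclideanSpace ℝ (Fin N) → ℝ)
    (hb : MemLp b ⊤ (volume.restrict Ω))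
    (hb_nonneg : ∀ᵐ x ∂(volume.restrict Ω), 0 ≤ b x)
    (a : ℝ) (ha : 0 < a)
    (v : EuclideanSpace ℝ (Fin N) → ℝ)
    (hv_meas : AEMeasurable v (volume.restrict Ω))
    (hv_pos : ∀ᵐ x ∂(volume.restrict Ω), 0 < v x)
    (hv_ints : IntegrableOn (fun x => |v x| ^ s) Ω)
    (hv_inth : IntegrableOn (fun x => h x * v x ^ (1 - γ)) Ω)
    (φ : ℝ → ℝ)
    (hφ : ∀ t : ℝ, φ t =
      a / 2 * t ^ 2 + (1 / (γ - 1)) * ∫ x in Ω, h x * g (t * v x) ^ (1 - γ)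
        + (1 / (2 * s)) * ∫ x in Ω, b x * g (t * v x) ^ (2 * s)) :
    Tendsto φ (nhdsWithin 0 (Set.Ioi 0)) atTop ∧
    Tendsto φ atTop atTop ∧
    ∃ t₀ : ℝ, 0 < t₀ ∧ φ t₀ = sInf (φ '' Set.Ioi 0) := by
  set μ := volume.restrict Ω
  have hg' : IsChangeOfVariables g := ⟨hg0, hg⟩
  have : IsFiniteMeasure μ := isFiniteMeasure_restrict.2 hΩb.measure_lt_top.ne
  have : NeZero μ := ⟨Measure.restrict_eq_zero.not.2 hΩpos.ne'⟩
  have hγ1 : 0 < γ - 1 := by linarith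
  have hs0 : 0 < s := by
    have : (3 : ℝ) ≤ N := by exact_mod_cast hN
    rw [hs]
    exact div_pos (by linarith) (by linarith)
  -- `∫ x in Ω, …` extends to the end of `hφ t`: the `b`-term is integrated as a constant
  have hsplit : EqOn φ (fun t => a / 2 * t ^ 2 + 1 / (γ - 1) * ∫ x, h x * g (t * v x) ^ (1 - γ) ∂μ
      + μ.real univ / (2 * s * (γ - 1)) * ∫ x, b x * g (t * v x) ^ (2 * s) ∂μ) (Ioi 0) :=
    fun t ht => by
      rw [hφ, integral_add (hg'.integrable_mul_rpow_comp_mul_of_nonpos (by linarith) hv_meas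
        hv_pos hh_int hv_inth ht) (integrable_const _), integral_const, smul_eq_mul]
      field_simp
      ring
  obtain ⟨h0, htop, t₀, ht₀, hmin⟩ := hg'.tendsto_and_exists_isMinOn_of_eqOn ha (by positivity)
    (by positivity) hγ hs0.le hh_int hh_pos hb hb_nonneg hv_meas hv_pos hv_ints hv_inth hsplit
  exact ⟨h0, htop, t₀, ht₀,
    (IsLeast.csInf_eq ⟨mem_image_of_mem φ ht₀, forall_mem_image.2 hmin⟩).symm⟩

/-- behaviour of the fiber map in the critical case: it blows up
at `0⁺` and at `+∞` and attains its infimum on `(0,∞)`. Here `2* = 2N/(N−2)`. -/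
theorem stmt_16 (N : ℕ) (hN : 3 ≤ N)
    (Ω : Set (EuclideanSpace ℝ (Fin N))) (hΩo : IsOpen Ω)
    (hΩb : Bornology.IsBounded Ω) (hΩpos : 0 < volume Ω)
    (γ : ℝ) (hγ : 1 < γ)
    (g : ℝ → ℝ) (hg0 : g 0 = 0)
    (hg : ∀ t : ℝ, HasDerivAt g ((1 + 2 * g t ^ 2) ^ (-(1 / 2) : ℝ)) t)
    (h : EuclideanSpace ℝ (Fin N) → ℝ)
    (hh_int : IntegrableOn h Ω)
    (hh_pos : ∀ᵐ x ∂(volume.restrict Ω), 0 < h x)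
    (s : ℝ) (hs : s = 2 * (N : ℝ) / ((N : ℝ) - 2))
    (b : EuclideanSpace ℝ (Fin N) → ℝ)
    (hb : MemLp b ⊤ (volume.restrict Ω))
    (hb_nonneg : ∀ᵐ x ∂(volume.restrict Ω), 0 ≤ b x)
    (a : ℝ) (ha : 0 < a)
    (v : EuclideanSpace ℝ (Fin N) → ℝ)
    (hv_meas : AEMeasurable v (volume.restrict Ω))
    (hv_pos : ∀ᵐ x ∂(volume.restrict Ω), 0 < v x)
    (hv_ints : IntegrableOn (fun x => |v x| ^ s) Ω)
    (hv_inth : IntegrableOn (fun x => h x * v x ^ (1 - γ)) Ω)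
    (φ : ℝ → ℝ)
    (hφ : ∀ t : ℝ, φ t =
      a / 2 * t ^ 2 + (1 / (γ - 1)) * ∫ x in Ω, h x * g (t * v x) ^ (1 - γ)
        + (1 / (2 * s)) * ∫ x in Ω, b x * g (t * v x) ^ (2 * s)) :
    Tendsto φ (nhdsWithin 0 (Set.Ioi 0)) atTop ∧
    Tendsto φ atTop atTop ∧
    ∃ t₀ : ℝ, 0 < t₀ ∧ φ t₀ = sInf (φ '' Set.Ioi 0) :=
  stmt_16_general N hN Ω hΩb hΩpos γ hγ g hg0 hg h hh_int hh_pos s hs b hb hb_nonneg a ha v hv_meas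
    hv_pos hv_ints hv_inth φ hφ
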